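/- arXiv:2405.01239 — 2 statements merged into one kernel-verified Lean document; each statement's English description precedes it below -/
import Mathlib

section
/- For every n ≥ 1, the sum over m from 2 to infinity of h_{m-1}/(m(m-1)) equals π²/6, where h_k = ∑_{i=1}^k 1/i is the k-th harmonic number. -/
open Filter Finset Topology

lemma partial_sum_eq (h : ℕ → ℝ)
    (hh : ∀ k, h k = ∑ i ∈ Finset.range k, (1 : ℝ) / (i + 1)) (N : ℕ) :
    ∑ j ∈ Finset.range N, h (j + 1) / (((j : ℝ) + 2) * ((j : ℝ) + 1)) =
      (∑ i ∈ Finset.range (N + 1), (1 : ℝ) / ((i : ℝ) + 1) ^ 2) - h (N + 1) / ((N : ℝ) + 1) := by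
  induction N with
  | zero => simp [hh 1]
  | succ n ih =>
    rw [Finset.sum_range_succ, ih, Finset.sum_range_succ (fun i => (1:ℝ)/((i:ℝ)+1)^2) (n+1)]
    have hstep : h (n + 2) = h (n + 1) + 1 / ((n : ℝ) + 2) := by
      rw [hh (n+2), hh (n+1), Finset.sum_range_succ]; push_cast; ring
    push_cast [hstep]
    have h1 : ((n : ℝ) + 1) ≠ 0 := by positivity
    have h2 : ((n : ℝ) + 2) ≠ 0 := by positivity
    field_simp
    ring

/-- The harmonic number `h k = ∑_{i=1}^k 1/i`; the sum over `m ≥ 2` of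
`h_{m-1}/(m(m-1))` equals `π²/6` (index shifted: `m = j + 2`). -/
theorem stmt_0 (h : ℕ → ℝ) (hh : ∀ k, h k = ∑ i ∈ Finset.range k, (1 : ℝ) / (i + 1)) :
    ∑' j : ℕ, h (j + 1) / (((j : ℝ) + 2) * ((j : ℝ) + 1)) = Real.pi ^ 2 / 6 := by
  have hnonneg : ∀ j : ℕ, 0 ≤ h (j + 1) / (((j : ℝ) + 2) * ((j : ℝ) + 1)) := by
    intro j
    apply div_nonneg
    · rw [hh]; exact Finset.sum_nonneg fun i _ => by positivity
    · positivity
  have hsum : HasSum (fun j : ℕ => h (j + 1) / (((j : ℝ) + 2) * ((j : ℝ) + 1)))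
      (Real.pi ^ 2 / 6) := by
    rw [hasSum_iff_tendsto_nat_of_nonneg hnonneg]
    have key : ∀ N, ∑ j ∈ Finset.range N, h (j + 1) / (((j : ℝ) + 2) * ((j : ℝ) + 1)) =
        (∑ i ∈ Finset.range (N + 1), (1 : ℝ) / ((i : ℝ) + 1) ^ 2) - h (N + 1) / ((N : ℝ) + 1) :=
      partial_sum_eq h hh
    simp only [key]
    have t1 : Tendsto (fun N : ℕ => ∑ i ∈ Finset.range (N + 1), (1 : ℝ) / ((i : ℝ) + 1) ^ 2)
        atTop (𝓝 (Real.pi ^ 2 / 6)) := by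
      have := hasSum_zeta_two.tendsto_sum_nat
      have h2 : ∀ N : ℕ, ∑ i ∈ Finset.range (N + 1), (1 : ℝ) / ((i : ℝ) + 1) ^ 2 =
          ∑ i ∈ Finset.range (N + 2), (1 : ℝ) / (i : ℝ) ^ 2 := by
        intro N
        rw [Finset.sum_range_succ' (fun i => (1:ℝ)/(i:ℝ)^2)]
        push_cast
        simp
      simp only [h2]
      exact this.comp (tendsto_add_atTop_nat 2)
    have t2 : Tendsto (fun N : ℕ => h (N + 1) / ((N : ℝ) + 1)) atTop (𝓝 0) := by
      have hu : Tendsto (fun i : ℕ => (1 : ℝ) / ((i : ℝ) + 1)) atTop (𝓝 0) :=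
        tendsto_one_div_add_atTop_nhds_zero_nat
      have := hu.cesaro
      have heq : ∀ N : ℕ, h (N + 1) / ((N : ℝ) + 1) =
          ((N + 1 : ℕ) : ℝ)⁻¹ * ∑ i ∈ Finset.range (N + 1), (1 : ℝ) / ((i : ℝ) + 1) := by
        intro N
        rw [hh]
        push_cast
        rw [inv_mul_eq_div, div_eq_div_iff (by positivity) (by positivity)]
      simp only [heq]
      exact (this.comp (tendsto_add_atTop_nat 1))
    simpa using t1.sub t2
  rw [hsum.tsum_eq]
end

section
/- With G₂(x) = e^{4x}/8 − (x/2)e^{2x} − 1/8 and G₁(x) = (e^{2x}-1)/2, one has ∫_0^1 (1-x)² G₁(x) G₂(x) dx = e⁶/1728 − e⁴/256 − 3e²/64 + 2447/6912. -/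
/-!
The integrand is a linear combination of terms `e^{kx} · p(x)` with `k ∈ {0, 2, 4, 6}` and `p`
a cubic. Since `(e^{kx} p)' = e^{kx} (k p + p')`, it has a primitive of the same shape, whose
coefficients are found by solving a triangular linear system for each `k`; the fundamental
theorem of calculus then gives the value.
-/

open Real

noncomputable section

def expCubic (k a b c d x : ℝ) : ℝ :=
  exp (k * x) * (a * x ^ 3 + b * x ^ 2 + c * x + d)

theorem hasDerivAt_expCubic (k a b c d x : ℝ) :
    HasDerivAt (expCubic k a b c d)
      (exp (k * x) * (k * a * x ^ 3 + (k * b + 3 * a) * x ^ 2 + (k * c + 2 * b) * x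
        + (k * d + c))) x := by
  have hexp : HasDerivAt (fun x => exp (k * x)) (exp (k * x) * k) x :=
    ((hasDerivAt_id x).const_mul k).exp.congr_deriv (by simp only [id, mul_one, mul_comm])
  have hcubic : HasDerivAt (fun x => a * x ^ 3 + b * x ^ 2 + c * x + d)
      (3 * a * x ^ 2 + 2 * b * x + c) x := by
    have := ((((hasDerivAt_pow 3 x).const_mul a).add ((hasDerivAt_pow 2 x).const_mul b)).add
      ((hasDerivAt_id x).const_mul c)).add_const d
    exact this.congr_deriv (by push_cast; ring)
  exact (hexp.mul hcubic).congr_deriv (by ring)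

def integrandPrimitive (x : ℝ) : ℝ :=
  expCubic 6 0 (1 / 96) (-7 / 288) (25 / 1728) x
    + expCubic 4 (-1 / 16) (5 / 32) (-7 / 64) (3 / 256) x
    + expCubic 2 (1 / 8) (-15 / 32) (21 / 32) (-23 / 64) x
    + expCubic 0 (1 / 48) (-1 / 16) (1 / 16) (-1 / 48) x

theorem hasDerivAt_integrandPrimitive (x : ℝ) :
    HasDerivAt integrandPrimitive
      ((1 - x) ^ 2 * ((exp (2 * x) - 1) / 2) * (exp (4 * x) / 8 - x / 2 * exp (2 * x) - 1 / 8))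
      x := by
  have h := (((hasDerivAt_expCubic 6 0 (1 / 96) (-7 / 288) (25 / 1728) x).add
    (hasDerivAt_expCubic 4 (-1 / 16) (5 / 32) (-7 / 64) (3 / 256) x)).add
    (hasDerivAt_expCubic 2 (1 / 8) (-15 / 32) (21 / 32) (-23 / 64) x)).add
    (hasDerivAt_expCubic 0 (1 / 48) (-1 / 16) (1 / 16) (-1 / 48) x)
  refine h.congr_deriv ?_
  have h4 : exp (4 * x) = exp (2 * x) ^ 2 := by rw [← exp_nat_mul]; ring_nf
  have h6 : exp (6 * x) = exp (2 * x) ^ 3 := by rw [← exp_nat_mul]; ring_nf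
  rw [h4, h6, zero_mul, exp_zero]
  ring

end

/-- With `G₁(x) = (e^{2x}-1)/2` and `G₂(x) = e^{4x}/8 − (x/2)e^{2x} − 1/8`,
`∫_0^1 (1-x)² G₁(x) G₂(x) dx = e⁶/1728 − e⁴/256 − 3e²/64 + 2447/6912`. -/
theorem stmt_9 :
    ∫ x in (0 : ℝ)..1,
        (1 - x) ^ 2 * ((Real.exp (2 * x) - 1) / 2)
          * (Real.exp (4 * x) / 8 - x / 2 * Real.exp (2 * x) - 1 / 8)
      = Real.exp 6 / 1728 - Real.exp 4 / 256 - 3 * Real.exp 2 / 64 + 2447 / 6912 := by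
  have hcont : Continuous fun x : ℝ =>
      (1 - x) ^ 2 * ((exp (2 * x) - 1) / 2) * (exp (4 * x) / 8 - x / 2 * exp (2 * x) - 1 / 8) := by
    fun_prop
  rw [intervalIntegral.integral_eq_sub_of_hasDerivAt (fun x _ => hasDerivAt_integrandPrimitive x)
    (hcont.intervalIntegrable 0 1)]
  simp only [integrandPrimitive, expCubic]
  norm_num
  ring
end
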